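/- arXiv:2204.13305 — 9 statements merged into one kernel-verified Lean document; each statement's English description precedes it below -/
import Mathlib

section
/- For every i ∈ {1,2,3,4}, the class of well-formed CAFs is a proper subclass of Image_i, and Image_i is a proper subclass of the class of all CAFs: wfCAF ⊊ Image_i ⊊ CAF. -/
/-- A claim-augmented argumentation framework (CAF): a finite set of arguments,
an attack relation between the arguments, and a claim function assigning
a claim to each argument.  Arguments and claims are drawn from `ℕ`. -/
structure CAF where
  args : Finset ℕ
  att : Set (ℕ × ℕ)
  claim : ℕ → ℕ
  att_dom : ∀ p ∈ att, p.1 ∈ args ∧ p.2 ∈ args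

namespace CAF

/-- A CAF is well-formed if arguments with the same claim attack the same arguments. -/
def wf (F : CAF) : Prop :=
  ∀ a ∈ F.args, ∀ b ∈ F.args, F.claim a = F.claim b →
    ∀ c, ((a, c) ∈ F.att ↔ (b, c) ∈ F.att)

/-- `S` attacks the argument `b` in `F`. -/
def attacks (F : CAF) (S : Set ℕ) (b : ℕ) : Prop := ∃ a ∈ S, (a, b) ∈ F.att

/-- The argument `a` is defended by `S` in `F`. -/
def defends (F : CAF) (S : Set ℕ) (a : ℕ) : Prop :=
  ∀ b, (b, a) ∈ F.att → F.attacks S b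

/-- The range `S⊕` of `S` in `F`. -/
def range (F : CAF) (S : Set ℕ) : Set ℕ := S ∪ {b | F.attacks S b}

/-- Conflict-free sets. -/
def cf (F : CAF) (S : Set ℕ) : Prop :=
  S ⊆ ↑F.args ∧ ∀ a ∈ S, ∀ b ∈ S, (a, b) ∉ F.att

/-- Admissible sets. -/
def adm (F : CAF) (S : Set ℕ) : Prop :=
  F.cf S ∧ ∀ a ∈ S, F.defends S a

/-- Complete extensions. -/
def com (F : CAF) (S : Set ℕ) : Prop :=
  F.adm S ∧ ∀ a ∈ F.args, F.defends S a → a ∈ S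

/-- Naive extensions: ⊆-maximal conflict-free sets. -/
def naive (F : CAF) (S : Set ℕ) : Prop :=
  F.cf S ∧ ¬ ∃ T, F.cf T ∧ S ⊂ T

/-- Stable extensions. -/
def stb (F : CAF) (S : Set ℕ) : Prop :=
  F.cf S ∧ ∀ a ∈ F.args, a ∉ S → F.attacks S a

/-- Preferred extensions: ⊆-maximal admissible sets. -/
def prf (F : CAF) (S : Set ℕ) : Prop :=
  F.adm S ∧ ¬ ∃ T, F.adm T ∧ S ⊂ T

/-- Semi-stable extensions: admissible sets with ⊆-maximal range among admissible sets. -/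
def sem (F : CAF) (S : Set ℕ) : Prop :=
  F.adm S ∧ ¬ ∃ T, F.adm T ∧ F.range S ⊂ F.range T

/-- Stage extensions: conflict-free sets with ⊆-maximal range among conflict-free sets. -/
def stg (F : CAF) (S : Set ℕ) : Prop :=
  F.cf S ∧ ¬ ∃ T, F.cf T ∧ F.range S ⊂ F.range T

/-- The claim-based variant `σ_c` of a semantics `σ`. -/
def claimSem (σ : CAF → Set ℕ → Prop) (F : CAF) : Set (Set ℕ) :=
  {C | ∃ S, σ F S ∧ F.claim '' S = C}

/-- The wf-problematic part of a CAF: the pairs of arguments `(a,b)` such that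
`(a,b)` is not an attack but some argument `a'` with the same claim as `a` attacks `b`. -/
def wfp (F : CAF) : Set (ℕ × ℕ) :=
  {p | p.1 ∈ F.args ∧ p.2 ∈ F.args ∧ p ∉ F.att ∧
       ∃ a' ∈ F.args, F.claim a' = F.claim p.1 ∧ (a', p.2) ∈ F.att}

end CAF

/-- A preference-based CAF (PCAF): a well-formed CAF together with an
asymmetric preference relation over its arguments. -/
structure PCAF extends CAF where
  pref : ℕ → ℕ → Prop
  pref_dom : ∀ a b, pref a b → a ∈ args ∧ b ∈ args
  pref_asymm : ∀ a b, pref a b → ¬ pref b a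
  isWf : toCAF.wf

/-- The attack relation obtained from a PCAF by Reduction `i` (`i ∈ {1,2,3,4}`). -/
def redAtt (i : ℕ) (F : PCAF) : Set (ℕ × ℕ) :=
  if i = 1 then {p | p ∈ F.att ∧ ¬ F.pref p.2 p.1}
  else if i = 2 then
    {p | (p ∈ F.att ∧ ¬ F.pref p.2 p.1) ∨
         ((p.2, p.1) ∈ F.att ∧ p ∉ F.att ∧ F.pref p.1 p.2)}
  else if i = 3 then
    {p | (p ∈ F.att ∧ ¬ F.pref p.2 p.1) ∨ (p ∈ F.att ∧ (p.2, p.1) ∉ F.att)}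
  else if i = 4 then
    {p | (p ∈ F.att ∧ ¬ F.pref p.2 p.1) ∨
         ((p.2, p.1) ∈ F.att ∧ p ∉ F.att ∧ F.pref p.1 p.2) ∨
         (p ∈ F.att ∧ (p.2, p.1) ∉ F.att)}
  else ∅

/-- The CAF `Red_i(F)` obtained from the PCAF `F` by Reduction `i`. -/
def Red (i : ℕ) (F : PCAF) : CAF where
  args := F.args
  att := redAtt i F
  claim := F.claim
  att_dom := by
    intro p hp
    unfold redAtt at hp
    split_ifs at hp
    · simp only [Set.mem_setOf_eq] at hp
      exact F.att_dom p hp.1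
    · simp only [Set.mem_setOf_eq] at hp
      rcases hp with ⟨h, -⟩ | ⟨h, -, -⟩
      · exact F.att_dom p h
      · exact ⟨(F.att_dom _ h).2, (F.att_dom _ h).1⟩
    · simp only [Set.mem_setOf_eq] at hp
      rcases hp with ⟨h, -⟩ | ⟨h, -⟩ <;> exact F.att_dom p h
    · simp only [Set.mem_setOf_eq] at hp
      rcases hp with ⟨h, -⟩ | ⟨h, -, -⟩ | ⟨h, -⟩
      · exact F.att_dom p h
      · exact ⟨(F.att_dom _ h).2, (F.att_dom _ h).1⟩
      · exact F.att_dom p h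
    · exact absurd hp (Set.notMem_empty p)

/-- `Image_i`: the class of CAFs obtainable by applying Reduction `i` to a PCAF. -/
def ImageI (i : ℕ) : Set CAF := {F | ∃ G : PCAF, Red i G = F}

/-- `ImageTrans_i`: the class of CAFs obtainable by applying Reduction `i`
to a PCAF with a transitive preference relation. -/
def ImageTransI (i : ℕ) : Set CAF :=
  {F | ∃ G : PCAF, Transitive G.pref ∧ Red i G = F}

/-- The class of well-formed CAFs. -/
def wfCAFs : Set CAF := {F | F.wf}

/-- The preference-claim-based variant `σ_p^i` of a semantics `σ`. -/
def prefSem (σ : CAF → Set ℕ → Prop) (i : ℕ) (F : PCAF) : Set (Set ℕ) :=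
  CAF.claimSem σ (Red i F)

/-- `E_0(C)`: all arguments of `F` with a claim in `C`. -/
def E0 (F : PCAF) (C : Set ℕ) : Set ℕ := {a | a ∈ F.args ∧ F.claim a ∈ C}

/-- `E_1^i(C)`: the arguments of `E_0(C)` not attacked by `E_0(C)` in the
underlying AF of `F` (this set does not depend on `i`). -/
def E1 (F : PCAF) (C : Set ℕ) : Set ℕ :=
  E0 F C \ {b | ∃ a ∈ E0 F C, (a, b) ∈ F.att}

/-- The sequence `E_k^i(C)`. -/
def Ek (F : PCAF) (i : ℕ) (C : Set ℕ) : ℕ → Set ℕ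
  | 0 => E0 F C
  | 1 => E1 F C
  | (k + 2) => {x | x ∈ Ek F i C (k + 1) ∧ (Red i F).defends (Ek F i C (k + 1)) x}

/-- `E_*^i(C)`: the fixed point of the sequence `E_k^i(C)` (reached after at
most `|A|` steps, since the sequence is ⊆-decreasing from index 1 on). -/
def Estar (F : PCAF) (i : ℕ) (C : Set ℕ) : Set ℕ := Ek F i C (F.args.card + 2)

/- Every reduction keeps the attacks that the preference does not reverse and only adds reversed
copies of attacks. Hence the empty preference realises every well-formed CAF, while a single
preference over a symmetric attack breaks well-formedness. Conversely, well-formedness of the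
PCAF turns an attack between two arguments with the same claim into a self-attack, which no
reduction removes, so a CAF with such an attack and no self-attacks is not an image. -/

namespace PCAF

variable {i : ℕ} {F : PCAF} {a b : ℕ}

lemma pref_irrefl (F : PCAF) (a : ℕ) : ¬ F.pref a a :=
  fun h => F.pref_asymm a a h h

lemma mem_redAtt_of_not_pref (hi : i ∈ ({1, 2, 3, 4} : Set ℕ)) (hab : (a, b) ∈ F.att)
    (hba : ¬ F.pref b a) : (a, b) ∈ redAtt i F := by
  rcases hi with rfl | rfl | rfl | rfl <;> simp [redAtt, hab, hba]

lemma mem_att_or_pref_of_mem_redAtt (h : (a, b) ∈ redAtt i F) :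
    (a, b) ∈ F.att ∨ ((b, a) ∈ F.att ∧ F.pref a b) := by
  unfold redAtt at h
  split_ifs at h <;> simp only [Set.mem_setOf_eq, Set.mem_empty_iff_false] at h <;> tauto

lemma notMem_redAtt_of_pref (hba : (b, a) ∈ F.att) (hpref : F.pref b a) :
    (a, b) ∉ redAtt i F := by
  have := F.pref_asymm b a hpref
  unfold redAtt
  split_ifs <;> simp [hba, hpref, this]

def ofWf (F : CAF) (h : F.wf) : PCAF where
  toCAF := F
  pref := fun _ _ => False
  pref_dom := fun _ _ => False.elim
  pref_asymm := fun _ _ => False.elim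
  isWf := h

lemma red_ofWf (hi : i ∈ ({1, 2, 3, 4} : Set ℕ)) (F : CAF) (h : F.wf) :
    Red i (ofWf F h) = F := by
  have hatt : redAtt i (ofWf F h) = F.att := by
    ext ⟨a, b⟩
    refine ⟨fun hp => ?_, fun hp => mem_redAtt_of_not_pref hi hp not_false⟩
    simpa [ofWf] using mem_att_or_pref_of_mem_redAtt hp
  cases F
  simp only [Red, hatt]
  rfl

end PCAF

lemma wfCAFs_subset_imageI {i : ℕ} (hi : i ∈ ({1, 2, 3, 4} : Set ℕ)) : wfCAFs ⊆ ImageI i :=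
  fun F hF => ⟨PCAF.ofWf F hF, PCAF.red_ofWf hi F hF⟩

def reversingPCAF : PCAF where
  args := {0, 1, 2}
  att := {(0, 2), (1, 2), (2, 0)}
  claim := fun n => if n = 2 then 1 else 0
  att_dom := by rintro p (rfl | rfl | rfl) <;> simp
  pref := fun a b => a = 2 ∧ b = 0
  pref_dom := by rintro a b ⟨rfl, rfl⟩; simp
  pref_asymm := by rintro a b ⟨rfl, rfl⟩ ⟨h, -⟩; omega
  isWf := by
    intro a ha b hb h c
    simp only [Finset.mem_insert, Finset.mem_singleton] at ha hb
    rcases ha with rfl | rfl | rfl <;> rcases hb with rfl | rfl | rfl <;>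
      simp_all [Prod.ext_iff]

lemma not_wf_red_reversingPCAF {i : ℕ} (hi : i ∈ ({1, 2, 3, 4} : Set ℕ)) :
    ¬ (Red i reversingPCAF).wf := by
  intro hwf
  have h12 : ((1 : ℕ), (2 : ℕ)) ∈ (Red i reversingPCAF).att :=
    PCAF.mem_redAtt_of_not_pref hi (by simp [reversingPCAF]) (by simp [reversingPCAF])
  have h02 : ((0 : ℕ), (2 : ℕ)) ∉ (Red i reversingPCAF).att :=
    PCAF.notMem_redAtt_of_pref (by simp [reversingPCAF]) (by simp [reversingPCAF])
  exact h02 ((hwf 1 (by simp [Red, reversingPCAF]) 0 (by simp [Red, reversingPCAF])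
    (by simp [Red, reversingPCAF]) 2).mp h12)

lemma wfCAFs_ssubset_imageI {i : ℕ} (hi : i ∈ ({1, 2, 3, 4} : Set ℕ)) : wfCAFs ⊂ ImageI i :=
  Set.ssubset_iff_subset_ne.mpr ⟨wfCAFs_subset_imageI hi, fun h =>
    not_wf_red_reversingPCAF hi (h ▸ ⟨reversingPCAF, rfl⟩ : Red i reversingPCAF ∈ wfCAFs)⟩

lemma self_attack_of_mem_imageI {i : ℕ} (hi : i ∈ ({1, 2, 3, 4} : Set ℕ)) {G : CAF}
    (hG : G ∈ ImageI i) {a b : ℕ} (hab : (a, b) ∈ G.att) (hclaim : G.claim a = G.claim b) :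
    (a, a) ∈ G.att ∨ (b, b) ∈ G.att := by
  obtain ⟨P, rfl⟩ := hG
  have ha : a ∈ P.args := ((Red i P).att_dom _ hab).1
  have hb : b ∈ P.args := ((Red i P).att_dom _ hab).2
  rcases PCAF.mem_att_or_pref_of_mem_redAtt hab with h | ⟨h, -⟩
  · exact .inr <| PCAF.mem_redAtt_of_not_pref hi
      ((P.isWf a ha b hb hclaim b).mp h) (P.pref_irrefl b)
  · exact .inl <| PCAF.mem_redAtt_of_not_pref hi
      ((P.isWf b hb a ha hclaim.symm a).mp h) (P.pref_irrefl a)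

def sameClaimAttackCAF : CAF where
  args := {0, 1}
  att := {(0, 1)}
  claim := fun _ => 0
  att_dom := by rintro p rfl; simp

lemma imageI_ssubset_univ {i : ℕ} (hi : i ∈ ({1, 2, 3, 4} : Set ℕ)) :
    ImageI i ⊂ (Set.univ : Set CAF) := by
  refine Set.ssubset_univ_iff.mpr fun h => ?_
  have hmem : sameClaimAttackCAF ∈ ImageI i := h ▸ Set.mem_univ _
  rcases self_attack_of_mem_imageI hi hmem (a := 0) (b := 1) rfl rfl with h | h <;>
    simp [sameClaimAttackCAF] at h

/-- For every `i ∈ {1,2,3,4}`, the class of well-formed CAFs is a proper subclass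
of `Image_i`, and `Image_i` is a proper subclass of the class of all CAFs. -/
theorem stmt_0 :
    ∀ i ∈ ({1, 2, 3, 4} : Set ℕ),
      wfCAFs ⊂ ImageI i ∧ ImageI i ⊂ (Set.univ : Set CAF) :=
  fun _ hi => ⟨wfCAFs_ssubset_imageI hi, imageI_ssubset_univ hi⟩
end

section
/- For all i ∈ {1,2,4} and all j ∈ {1,2,3,4} with i ≠ j, the class Image_i is not a subclass of Image_j, i.e. there exists a CAF in Image_i that is not in Image_j. -/
/-! All three witnesses are reductions of one PCAF on two arguments with a common claim, with
attacks `0 → 0`, `1 → 0` and preference `0 ≻ 1`. Every reduction keeps exactly the self-attacks,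
so a PCAF reducing to one of the witnesses has the same self-attacks, and well-formedness then
forces its attacks to be `0 → 0`, `1 → 0` again. The reductions treat the one-sided attack
`1 → 0` on a preferred argument differently: Reduction 1 deletes it, Reduction 2 reverses it,
Reduction 3 keeps it, and Reduction 4 keeps it and adds the reverse. -/

namespace PCAF

variable {j : ℕ} (G : PCAF) {a b : ℕ}

lemma pref_irrefl_s1 (a : ℕ) : ¬ G.pref a a := fun h => G.pref_asymm a a h h

lemma mem_redAtt_self_iff (hj : j ∈ ({1, 2, 3, 4} : Set ℕ)) :
    (a, a) ∈ redAtt j G ↔ (a, a) ∈ G.att := by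
  have := G.pref_irrefl_s1 a
  rcases hj with rfl | rfl | rfl | rfl <;> simp [redAtt, this]

lemma redAtt_subset_att (hj : j = 1 ∨ j = 3) : redAtt j G ⊆ G.att := by
  rcases hj with rfl | rfl
  · exact fun p hp => hp.1
  · rintro p (⟨hp, -⟩ | ⟨hp, -⟩) <;> exact hp

lemma mem_redAtt_of_swap_notMem (hj : j = 3 ∨ j = 4) (hab : (a, b) ∈ G.att)
    (hba : (b, a) ∉ G.att) : (a, b) ∈ redAtt j G := by
  rcases hj with rfl | rfl <;> simp [redAtt, hab, hba]

lemma mem_redAtt_of_swap_notMem_redAtt (hj : j = 2 ∨ j = 4) (hba : (b, a) ∈ G.att)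
    (hab : (a, b) ∉ G.att) (hd : (b, a) ∉ redAtt j G) : (a, b) ∈ redAtt j G := by
  rcases hj with rfl | rfl <;> simp_all [redAtt]

lemma swap_notMem_redAtt (hj : j = 1 ∨ j = 2) (hab : (a, b) ∈ G.att)
    (hba : (b, a) ∉ G.att) (hd : (a, b) ∈ redAtt j G) : (b, a) ∉ redAtt j G := by
  rcases hj with rfl | rfl <;> simp_all [redAtt]

lemma mem_att_and_swap_notMem_att (hj : j ∈ ({1, 2, 3, 4} : Set ℕ)) (ha : a ∈ G.args)
    (hb : b ∈ G.args) (hab : G.claim a = G.claim b) (haa : (a, a) ∈ redAtt j G)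
    (hbb : (b, b) ∉ redAtt j G) : (b, a) ∈ G.att ∧ (a, b) ∉ G.att := by
  rw [G.mem_redAtt_self_iff hj] at haa hbb
  have hwf := G.isWf a ha b hb hab
  exact ⟨(hwf a).1 haa, fun h => hbb ((hwf b).1 h)⟩

end PCAF

def basePCAF : PCAF where
  args := {0, 1}
  att := {(0, 0), (1, 0)}
  claim := fun _ => 0
  att_dom := by rintro p (rfl | rfl) <;> simp
  pref := fun a b => a = 0 ∧ b = 1
  pref_dom := by rintro a b ⟨rfl, rfl⟩; simp
  pref_asymm := by rintro a b ⟨rfl, rfl⟩ ⟨h, -⟩; exact one_ne_zero h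
  isWf := by
    intro a ha b hb _ c
    simp only [Finset.mem_insert, Finset.mem_singleton] at ha hb
    simp only [Set.mem_insert_iff, Set.mem_singleton_iff, Prod.ext_iff]
    omega

lemma mem_redAtt_basePCAF_zero_one {i : ℕ} (hi : i ∈ ({1, 2, 3, 4} : Set ℕ)) :
    (0, 1) ∈ redAtt i basePCAF ↔ i = 2 ∨ i = 4 := by
  rcases hi with rfl | rfl | rfl | rfl <;> simp [redAtt, basePCAF]

lemma mem_redAtt_basePCAF_one_zero {i : ℕ} (hi : i ∈ ({1, 2, 3, 4} : Set ℕ)) :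
    (1, 0) ∈ redAtt i basePCAF ↔ i = 3 ∨ i = 4 := by
  rcases hi with rfl | rfl | rfl | rfl <;> simp [redAtt, basePCAF]

lemma Red_basePCAF_notMem_ImageI {i j : ℕ} (hi : i ∈ ({1, 2, 4} : Set ℕ))
    (hj : j ∈ ({1, 2, 3, 4} : Set ℕ)) (hij : i ≠ j) : Red i basePCAF ∉ ImageI j := by
  rintro ⟨G, hG⟩
  have hatt : redAtt j G = redAtt i basePCAF := congrArg CAF.att hG
  have hargs : G.args = {0, 1} := congrArg CAF.args hG
  have hclaim : G.claim = fun _ => 0 := congrArg CAF.claim hG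
  have hi' : i ∈ ({1, 2, 3, 4} : Set ℕ) := by rcases hi with rfl | rfl | rfl <;> simp
  have h00 : (0, 0) ∈ redAtt j G := by
    rw [hatt, basePCAF.mem_redAtt_self_iff hi']; simp [basePCAF]
  have h11 : (1, 1) ∉ redAtt j G := by
    rw [hatt, basePCAF.mem_redAtt_self_iff hi']; simp [basePCAF]
  obtain ⟨h10, h01⟩ := G.mem_att_and_swap_notMem_att hj (by simp [hargs]) (by simp [hargs])
    (by simp [hclaim]) h00 h11
  have h01red := hatt ▸ mem_redAtt_basePCAF_zero_one hi'
  have h10red := hatt ▸ mem_redAtt_basePCAF_one_zero hi'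
  rcases hi with rfl | rfl | rfl <;> norm_num at h01red h10red <;>
    rcases hj with rfl | rfl | rfl | rfl
  · exact hij rfl
  · exact h01red (G.mem_redAtt_of_swap_notMem_redAtt (.inl rfl) h10 h01 h10red)
  · exact h10red (G.mem_redAtt_of_swap_notMem (.inl rfl) h10 h01)
  · exact h10red (G.mem_redAtt_of_swap_notMem (.inr rfl) h10 h01)
  · exact h01 (G.redAtt_subset_att (.inl rfl) h01red)
  · exact hij rfl
  · exact h01 (G.redAtt_subset_att (.inr rfl) h01red)
  · exact h10red (G.mem_redAtt_of_swap_notMem (.inr rfl) h10 h01)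
  · exact h01 (G.redAtt_subset_att (.inl rfl) h01red)
  · exact G.swap_notMem_redAtt (.inr rfl) h10 h01 h10red h01red
  · exact h01 (G.redAtt_subset_att (.inr rfl) h01red)
  · exact hij rfl

/-- For all `i ∈ {1,2,4}` and all `j ∈ {1,2,3,4}` with `i ≠ j`,
`Image_i` is not a subclass of `Image_j`. -/
theorem stmt_1 :
    ∀ i ∈ ({1, 2, 4} : Set ℕ), ∀ j ∈ ({1, 2, 3, 4} : Set ℕ), i ≠ j →
      ¬ ImageI i ⊆ ImageI j :=
  fun _ hi _ hj hij hsub => Red_basePCAF_notMem_ImageI hi hj hij (hsub ⟨basePCAF, rfl⟩)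
end

section
/- For every i ∈ {1,2,4}, the class Image_3 is a proper subclass of Image_i: every CAF obtainable by applying Reduction 3 to a PCAF is also obtainable by applying Reduction i to some PCAF, and the inclusion is strict. -/
/-!
Restricting the preference of a PCAF to pairs of arguments that attack each other makes
Reductions 1, 2 and 4 coincide with Reduction 3, which gives `Image_3 ⊆ Image_i`.

Reduction 3 deletes an attack only when the reverse attack is kept, so every attack of the
underlying wfCAF survives in at least one direction. By well-formedness, in a CAF of `Image_3`
an argument sharing its claim with an attacker of `b` is therefore in conflict with `b`
(`CAF.WeaklyWf`). A mutual attack `0 ⇄ 1` next to an isolated argument `2` with the claim of `1`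
violates this and lies in `Image_1` and `Image_4`; the chain `1 → 2 → 0` next to an isolated
argument `3` with the claim of `2` violates it and lies in `Image_2`.
-/

theorem CAF.ext {F G : CAF} (h_args : F.args = G.args) (h_att : F.att = G.att)
    (h_claim : F.claim = G.claim) : F = G := by
  cases F; cases G; simp_all

theorem mem_redAtt_three {G : PCAF} {p : ℕ × ℕ} :
    p ∈ redAtt 3 G ↔ p ∈ G.att ∧ (¬ G.pref p.2 p.1 ∨ p.swap ∉ G.att) := by
  grind [redAtt]

theorem mem_or_swap_mem_redAtt_three (G : PCAF) {p : ℕ × ℕ} (hp : p ∈ G.att) :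
    p ∈ redAtt 3 G ∨ p.swap ∈ redAtt 3 G := by
  simp only [mem_redAtt_three, Prod.fst_swap, Prod.snd_swap, Prod.swap_swap]
  by_cases h : G.pref p.2 p.1
  · by_cases hs : p.swap ∈ G.att
    · exact .inr ⟨hs, .inl (G.pref_asymm _ _ h)⟩
    · exact .inl ⟨hp, .inr hs⟩
  · exact .inl ⟨hp, .inl h⟩

def CAF.WeaklyWf (F : CAF) : Prop :=
  ∀ a ∈ F.args, ∀ a' ∈ F.args, F.claim a = F.claim a' →
    ∀ b, (a, b) ∈ F.att → (a', b) ∈ F.att ∨ (b, a') ∈ F.att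

theorem weaklyWf_of_mem_imageI_three {F : CAF} (hF : F ∈ ImageI 3) : F.WeaklyWf := by
  obtain ⟨G, rfl⟩ := hF
  intro a ha a' ha' h_claim b hab
  have h_att : (a', b) ∈ G.att := (G.isWf a ha a' ha' h_claim b).1 (mem_redAtt_three.1 hab).1
  exact mem_or_swap_mem_redAtt_three G h_att

def PCAF.restrictPrefToMutualAttacks (G : PCAF) : PCAF where
  toCAF := G.toCAF
  pref a b := G.pref a b ∧ (a, b) ∈ G.att ∧ (b, a) ∈ G.att
  pref_dom a b h := G.pref_dom a b h.1
  pref_asymm a b h h' := G.pref_asymm a b h.1 h'.1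
  isWf := G.isWf

theorem redAtt_restrictPrefToMutualAttacks {i : ℕ} (hi : i = 1 ∨ i = 2 ∨ i = 4) (G : PCAF) :
    redAtt i G.restrictPrefToMutualAttacks = redAtt 3 G := by
  ext p
  rcases hi with rfl | rfl | rfl <;>
    simp only [redAtt, PCAF.restrictPrefToMutualAttacks, ↓reduceIte, OfNat.ofNat_ne_one,
      Nat.succ_ne_self, Nat.reduceEqDiff, Prod.mk.eta, not_and, Set.mem_ofPred_eq] <;>
    tauto

theorem imageI_three_subset {i : ℕ} (hi : i = 1 ∨ i = 2 ∨ i = 4) : ImageI 3 ⊆ ImageI i := by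
  rintro _ ⟨G, rfl⟩
  exact ⟨G.restrictPrefToMutualAttacks, CAF.ext rfl (redAtt_restrictPrefToMutualAttacks hi G) rfl⟩

def mutualExample : CAF where
  args := {0, 1, 2}
  att := {(0, 1), (1, 0)}
  claim n := if n = 0 then 0 else 1
  att_dom := by grind

theorem not_weaklyWf_mutualExample : ¬ mutualExample.WeaklyWf := by
  intro h
  simpa [mutualExample] using h 1 (by simp [mutualExample]) 2 (by simp [mutualExample]) rfl 0

def mutualExamplePref₁ : PCAF where
  args := {0, 1, 2}
  att := {(0, 1), (1, 0), (2, 0)}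
  claim := mutualExample.claim
  att_dom := by grind
  pref x y := x = 0 ∧ y = 2
  pref_dom := by rintro a b ⟨rfl, rfl⟩; simp
  pref_asymm := by rintro a b ⟨rfl, rfl⟩; simp
  isWf := by
    intro a ha b hb h_claim c
    simp only [Finset.mem_insert, Finset.mem_singleton] at ha hb
    rcases ha with rfl | rfl | rfl <;> rcases hb with rfl | rfl | rfl <;>
      simp_all [mutualExample, Prod.ext_iff]

theorem mutualExample_mem_imageI_one : mutualExample ∈ ImageI 1 := by
  refine ⟨mutualExamplePref₁, CAF.ext rfl ?_ rfl⟩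
  ext ⟨a, b⟩
  simp only [Red, mutualExamplePref₁, mutualExample, redAtt, ↓reduceIte, Set.mem_insert_iff,
    Set.mem_singleton_iff, not_and, Set.mem_ofPred_eq, Prod.mk.injEq]
  omega

def mutualExamplePref₄ : PCAF where
  args := {0, 1, 2}
  att := {(0, 1)}
  claim := mutualExample.claim
  att_dom := by grind
  pref x y := x = 1 ∧ y = 0
  pref_dom := by rintro a b ⟨rfl, rfl⟩; simp
  pref_asymm := by rintro a b ⟨rfl, rfl⟩; simp
  isWf := by
    intro a ha b hb h_claim c
    simp only [Finset.mem_insert, Finset.mem_singleton] at ha hb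
    rcases ha with rfl | rfl | rfl <;> rcases hb with rfl | rfl | rfl <;>
      simp_all [mutualExample, Prod.ext_iff]

theorem mutualExample_mem_imageI_four : mutualExample ∈ ImageI 4 := by
  refine ⟨mutualExamplePref₄, CAF.ext rfl ?_ rfl⟩
  ext ⟨a, b⟩
  simp only [Red, mutualExamplePref₄, mutualExample, redAtt, OfNat.ofNat_ne_one, ↓reduceIte,
    Nat.reduceEqDiff, Nat.succ_ne_self, Set.mem_singleton_iff, not_and, Prod.mk.injEq,
    Set.mem_ofPred_eq, Set.mem_insert_iff]
  omega

def chainExample : CAF where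
  args := {0, 1, 2, 3}
  att := {(1, 2), (2, 0)}
  claim n := if n ≤ 1 then 0 else 1
  att_dom := by grind

theorem not_weaklyWf_chainExample : ¬ chainExample.WeaklyWf := by
  intro h
  simpa [chainExample] using h 2 (by simp [chainExample]) 3 (by simp [chainExample]) rfl 0

def chainExamplePref₂ : PCAF where
  args := {0, 1, 2, 3}
  att := {(0, 2), (1, 2)}
  claim := chainExample.claim
  att_dom := by grind
  pref x y := x = 2 ∧ y = 0
  pref_dom := by rintro a b ⟨rfl, rfl⟩; simp
  pref_asymm := by rintro a b ⟨rfl, rfl⟩; simp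
  isWf := by
    intro a ha b hb h_claim c
    simp only [Finset.mem_insert, Finset.mem_singleton] at ha hb
    rcases ha with rfl | rfl | rfl | rfl <;> rcases hb with rfl | rfl | rfl | rfl <;>
      simp_all [chainExample, Prod.ext_iff]

theorem chainExample_mem_imageI_two : chainExample ∈ ImageI 2 := by
  refine ⟨chainExamplePref₂, CAF.ext rfl ?_ rfl⟩
  ext ⟨a, b⟩
  simp only [Red, chainExamplePref₂, chainExample, redAtt, OfNat.ofNat_ne_one, ↓reduceIte,
    Set.mem_insert_iff, Set.mem_singleton_iff, not_and, Prod.mk.injEq, not_or, Set.mem_ofPred_eq]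
  omega

/-- For every `i ∈ {1,2,4}`, the class `Image_3` is a proper subclass of `Image_i`. -/
theorem stmt_2 :
    ∀ i ∈ ({1, 2, 4} : Set ℕ), ImageI 3 ⊂ ImageI i := by
  intro i hi
  simp only [Set.mem_insert_iff, Set.mem_singleton_iff] at hi
  refine (Set.ssubset_iff_of_subset (imageI_three_subset hi)).2 ?_
  rcases hi with rfl | rfl | rfl
  · exact ⟨mutualExample, mutualExample_mem_imageI_one,
      mt weaklyWf_of_mem_imageI_three not_weaklyWf_mutualExample⟩
  · exact ⟨chainExample, chainExample_mem_imageI_two,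
      mt weaklyWf_of_mem_imageI_three not_weaklyWf_chainExample⟩
  · exact ⟨mutualExample, mutualExample_mem_imageI_four,
      mt weaklyWf_of_mem_imageI_three not_weaklyWf_mutualExample⟩
end

section
/- A CAF F = (A,R,claim) belongs to Image_1 (i.e. F = Red_1(F') for some PCAF F') if and only if for all arguments a,b, (a,b) ∈ wfp(F) implies (b,a) ∉ wfp(F). -/
/-!
In `Red_1(G)` a wf-problematic pair `(a, b)` is, by well-formedness of `G`, an attack of `G`
that was removed because `b ≻ a`; a symmetric pair would contradict the asymmetry of `≻`.
Conversely, if `wfp(F)` is asymmetric, adding `wfp(F)` to the attacks of `F` gives a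
well-formed CAF, and letting `b ≻ a` exactly when `(a, b) ∈ wfp(F)` makes Reduction 1
remove precisely the added attacks.
-/

namespace CAF

theorem mem_att_union_wfp_iff (F : CAF) {a : ℕ} (ha : a ∈ F.args) (b : ℕ) :
    (a, b) ∈ F.att ∪ F.wfp ↔ ∃ a' ∈ F.args, F.claim a' = F.claim a ∧ (a', b) ∈ F.att := by
  constructor
  · rintro (hab | ⟨-, -, -, hclaim⟩)
    · exact ⟨a, ha, rfl, hab⟩
    · exact hclaim
  · rintro ⟨a', ha', hclaim, ha'b⟩
    by_cases hab : (a, b) ∈ F.att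
    · exact Or.inl hab
    · exact Or.inr ⟨ha, (F.att_dom _ ha'b).2, hab, a', ha', hclaim, ha'b⟩

def wfCompletion (F : CAF) : CAF where
  args := F.args
  att := F.att ∪ F.wfp
  claim := F.claim
  att_dom := by
    rintro p (hp | ⟨ha, hb, -⟩)
    · exact F.att_dom p hp
    · exact ⟨ha, hb⟩

theorem wf_wfCompletion (F : CAF) : F.wfCompletion.wf := by
  intro a ha b hb hclaim c
  change F.claim a = F.claim b at hclaim
  change (a, c) ∈ F.att ∪ F.wfp ↔ (b, c) ∈ F.att ∪ F.wfp
  rw [F.mem_att_union_wfp_iff ha, F.mem_att_union_wfp_iff hb, hclaim]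

def toPCAF (F : CAF) (h : ∀ a b : ℕ, (a, b) ∈ F.wfp → (b, a) ∉ F.wfp) : PCAF where
  toCAF := F.wfCompletion
  pref a b := (b, a) ∈ F.wfp
  pref_dom _ _ hp := ⟨hp.2.1, hp.1⟩
  pref_asymm a b := h b a
  isWf := F.wf_wfCompletion

theorem red_one_toPCAF (F : CAF) (h : ∀ a b : ℕ, (a, b) ∈ F.wfp → (b, a) ∉ F.wfp) :
    Red 1 (F.toPCAF h) = F := by
  have hatt : redAtt 1 (F.toPCAF h) = F.att := by
    ext p
    simp only [redAtt]
    constructor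
    · rintro ⟨hp | hp, hnp⟩
      · exact hp
      · exact absurd hp hnp
    · exact fun hp => ⟨Or.inl hp, fun hwfp => hwfp.2.2.1 hp⟩
  cases F
  simp only [Red, CAF.mk.injEq]
  exact ⟨rfl, hatt, rfl⟩

end CAF

namespace PCAF

theorem att_of_mem_wfp_red_one (G : PCAF) {a b : ℕ} (hab : (a, b) ∈ (Red 1 G).wfp) :
    (a, b) ∈ G.att := by
  obtain ⟨ha, -, -, a', ha', hclaim, ha'b⟩ := hab
  exact (G.isWf a' ha' a ha hclaim b).mp ha'b.1

theorem pref_of_mem_wfp_red_one (G : PCAF) {a b : ℕ} (hab : (a, b) ∈ (Red 1 G).wfp) :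
    G.pref b a := by
  by_contra hpref
  exact hab.2.2.1 ⟨G.att_of_mem_wfp_red_one hab, hpref⟩

end PCAF

/-- Characterization of `Image_1`: a CAF `F` belongs to `Image_1` iff
`(a,b) ∈ wfp(F)` implies `(b,a) ∉ wfp(F)`. -/
theorem stmt_3 (F : CAF) :
    F ∈ ImageI 1 ↔ ∀ a b : ℕ, (a, b) ∈ F.wfp → (b, a) ∉ F.wfp := by
  constructor
  · rintro ⟨G, rfl⟩ a b hab hba
    exact G.pref_asymm a b (G.pref_of_mem_wfp_red_one hba) (G.pref_of_mem_wfp_red_one hab)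
  · exact fun h => ⟨F.toPCAF h, F.red_one_toPCAF h⟩
end

section
/- A CAF F = (A,R,claim) belongs to Image_2 (i.e. F = Red_2(F') for some PCAF F') if and only if there are no arguments a,a',b,b' in F with claim(a)=claim(a') and claim(b)=claim(b') such that (a,b) ∈ wfp(F), (b,a) ∉ R, (a',b) ∈ R, and either (b,a') ∈ R, or ((a',b') ∉ R and (b',a') ∉ R). -/
/-! With the preference `p ≻ q :↔ (p,q) ∈ R ∧ (q,p) ∉ R`, Reduction 2 maps a well-formed
attack relation `S` to `R` as soon as `S` contains every mutual attack of `R`, lies inside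
`R ∪ R⁻¹` and meets every attack of `R` in one direction; conversely the attack relation of
any PCAF `G` has these properties with respect to `Red 2 G`. So `F ∈ Image_2` iff such an `S`
exists. The configuration of the theorem rules out every such `S`: claim `a` may not attack `b`
in `S`, so `b` must attack `a'` in `S`, which contradicts `(b,a') ∈ R` (then `(a',b)` is mutual)
or, by well-formedness, the unrelated pair `a'`, `b'`. In its absence, reversing exactly the
attacks that are forced to be reversed gives such an `S`. -/

lemma mem_red_two_att {G : PCAF} {p : ℕ × ℕ} :
    p ∈ (Red 2 G).att ↔ (p ∈ G.att ∧ ¬ G.pref p.2 p.1) ∨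
      ((p.2, p.1) ∈ G.att ∧ p ∉ G.att ∧ G.pref p.1 p.2) := by
  simp [Red, redAtt]

namespace CAF

structure IsRed2Source (F : CAF) (S : Set (ℕ × ℕ)) : Prop where
  wf : ∀ a ∈ F.args, ∀ b ∈ F.args, F.claim a = F.claim b → ∀ c, ((a, c) ∈ S ↔ (b, c) ∈ S)
  mem_of_mutual : ∀ x y, (x, y) ∈ F.att → (y, x) ∈ F.att → (x, y) ∈ S
  att_or_att_of_mem : ∀ x y, (x, y) ∈ S → (x, y) ∈ F.att ∨ (y, x) ∈ F.att
  mem_or_mem_of_att : ∀ x y, (x, y) ∈ F.att → (x, y) ∈ S ∨ (y, x) ∈ S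

def HasRed2Obstruction (F : CAF) : Prop :=
  ∃ a a' b b' : ℕ,
    a ∈ F.args ∧ a' ∈ F.args ∧ b ∈ F.args ∧ b' ∈ F.args ∧
    F.claim a = F.claim a' ∧ F.claim b = F.claim b' ∧
    (a, b) ∈ F.wfp ∧ (b, a) ∉ F.att ∧ (a', b) ∈ F.att ∧
    ((b, a') ∈ F.att ∨ ((a', b') ∉ F.att ∧ (b', a') ∉ F.att))

/-- In a source relation the argument `a` forbids claim `c` to attack `b`, so the attacks of
claim `c` on `b` must come from reversed attacks of `b`. -/
def MustReverse (F : CAF) (c b : ℕ) : Prop :=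
  (∃ u, F.claim u = c ∧ (u, b) ∈ F.att) ∧
    ∃ a ∈ F.args, F.claim a = c ∧ (a, b) ∉ F.att ∧ (b, a) ∉ F.att

def red2Source (F : CAF) : Set (ℕ × ℕ) :=
  {p | p.1 ∈ F.args ∧
    (((∃ u, F.claim u = F.claim p.1 ∧ (u, p.2) ∈ F.att) ∧
        ¬ F.MustReverse (F.claim p.1) p.2) ∨
      ∃ b, F.claim b = F.claim p.1 ∧ (p.2, b) ∈ F.att ∧ F.MustReverse (F.claim p.2) b)}

lemma isRed2Source_red_two (G : PCAF) : (Red 2 G).IsRed2Source G.att where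
  wf := G.isWf
  mem_of_mutual x y hxy hyx := by
    have := G.pref_asymm x y
    simp only [mem_red_two_att] at hxy hyx
    tauto
  att_or_att_of_mem x y hxy := by
    have := G.pref_asymm y x
    simp only [mem_red_two_att]
    tauto
  mem_or_mem_of_att x y hxy := by
    simp only [mem_red_two_att] at hxy
    tauto

theorem IsRed2Source.mem_imageI_two {F : CAF} {S : Set (ℕ × ℕ)}
    (hS : F.IsRed2Source S) : F ∈ ImageI 2 := by
  let G : PCAF :=
    { args := F.args
      att := S
      claim := F.claim
      att_dom := fun p hp => (hS.att_or_att_of_mem _ _ hp).elim (F.att_dom p)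
        fun h => (F.att_dom _ h).symm
      pref := fun p q => (p, q) ∈ F.att ∧ (q, p) ∉ F.att
      pref_dom := fun _ _ h => F.att_dom _ h.1
      pref_asymm := fun _ _ h h' => h'.2 h.1
      isWf := hS.wf }
  have hatt : (Red 2 G).att = F.att := by
    ext ⟨u, v⟩
    have := hS.mem_of_mutual u v
    have := hS.att_or_att_of_mem u v
    have := hS.att_or_att_of_mem v u
    have := hS.mem_or_mem_of_att u v
    simp only [mem_red_two_att, G]
    tauto
  refine ⟨G, ?_⟩
  obtain ⟨args, att, claim, att_dom⟩ := F
  simp only [Red, CAF.mk.injEq] at hatt ⊢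
  exact ⟨rfl, hatt, rfl⟩

theorem IsRed2Source.not_hasRed2Obstruction {F : CAF} {S : Set (ℕ × ℕ)}
    (hS : F.IsRed2Source S) : ¬ F.HasRed2Obstruction := by
  rintro ⟨a, a', b, b', ha, ha', hb, hb', hca, hcb, ⟨-, -, hab, -⟩, hba, ha'b, hb_a'⟩
  have habS : (a, b) ∉ S := fun h => (hS.att_or_att_of_mem a b h).elim hab hba
  have ha'bS : (a', b) ∉ S := fun h => habS ((hS.wf a ha a' ha' hca b).mpr h)
  have hba'S : (b, a') ∈ S := (hS.mem_or_mem_of_att a' b ha'b).resolve_left ha'bS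
  rcases hb_a' with hba' | ⟨ha'b', hb'a'⟩
  · exact ha'bS (hS.mem_of_mutual a' b ha'b hba')
  · have hb'a'S : (b', a') ∈ S := (hS.wf b hb b' hb' hcb a').mp hba'S
    exact (hS.att_or_att_of_mem b' a' hb'a'S).elim hb'a' ha'b'

lemma reversal_of_not_hasRed2Obstruction {F : CAF} (hF : ¬ F.HasRed2Obstruction)
    {x b : ℕ} (hxb : (x, b) ∈ F.att) (hrev : F.MustReverse (F.claim x) b) :
    (b, x) ∉ F.att ∧
      ∀ b' ∈ F.args, F.claim b' = F.claim b → (x, b') ∈ F.att ∨ (b', x) ∈ F.att := by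
  obtain ⟨⟨u, hcu, hub⟩, a, ha, hca, hab, hba⟩ := hrev
  have hx := (F.att_dom _ hxb).1
  have hb := (F.att_dom _ hxb).2
  have hwfp : (a, b) ∈ F.wfp := ⟨ha, hb, hab, u, (F.att_dom _ hub).1, hcu.trans hca.symm, hub⟩
  refine ⟨fun hbx => hF ⟨a, x, b, b, ha, hx, hb, hb, hca, rfl, hwfp, hba, hxb, .inl hbx⟩, ?_⟩
  intro b' hb' hcb'
  by_contra! h
  exact hF ⟨a, x, b, b', ha, hx, hb, hb', hca, hcb'.symm, hwfp, hba, hxb, .inr h⟩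

theorem isRed2Source_red2Source {F : CAF} (hF : ¬ F.HasRed2Obstruction) :
    F.IsRed2Source F.red2Source where
  wf a ha b hb hab c := by
    simp only [red2Source, Set.mem_ofPred_eq, hab, ha, hb, true_and]
  mem_of_mutual x y hxy hyx := by
    refine ⟨(F.att_dom _ hxy).1, .inl ⟨⟨x, rfl, hxy⟩, fun hrev => ?_⟩⟩
    exact (reversal_of_not_hasRed2Obstruction hF hxy hrev).1 hyx
  att_or_att_of_mem x y := by
    rintro ⟨hx, ⟨hattacked, hnrev⟩ | ⟨b, hcb, hyb, hrev⟩⟩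
    · by_contra! h
      exact hnrev ⟨hattacked, x, hx, rfl, h⟩
    · exact ((reversal_of_not_hasRed2Obstruction hF hyb hrev).2 x hx hcb.symm).symm
  mem_or_mem_of_att x y hxy := by
    by_cases hrev : F.MustReverse (F.claim x) y
    · exact .inr ⟨(F.att_dom _ hxy).2, .inr ⟨y, rfl, hxy, hrev⟩⟩
    · exact .inl ⟨(F.att_dom _ hxy).1, .inl ⟨⟨x, rfl, hxy⟩, hrev⟩⟩

end CAF

/-- Characterization of `Image_2`: a CAF `F` belongs to `Image_2` iff there are no
arguments `a, a', b, b'` of `F` with `claim a = claim a'` and `claim b = claim b'`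
such that `(a,b) ∈ wfp(F)`, `(b,a) ∉ R`, `(a',b) ∈ R`, and either `(b,a') ∈ R` or
(`(a',b') ∉ R` and `(b',a') ∉ R`). -/
theorem stmt_4 (F : CAF) :
    F ∈ ImageI 2 ↔
      ¬ ∃ a a' b b' : ℕ,
          a ∈ F.args ∧ a' ∈ F.args ∧ b ∈ F.args ∧ b' ∈ F.args ∧
          F.claim a = F.claim a' ∧ F.claim b = F.claim b' ∧
          (a, b) ∈ F.wfp ∧ (b, a) ∉ F.att ∧ (a', b) ∈ F.att ∧
          ((b, a') ∈ F.att ∨ ((a', b') ∉ F.att ∧ (b', a') ∉ F.att)) := by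
  refine ⟨?_, fun hF => (CAF.isRed2Source_red2Source hF).mem_imageI_two⟩
  rintro ⟨G, rfl⟩
  exact (CAF.isRed2Source_red_two G).not_hasRed2Obstruction
end

section
/- A CAF F = (A,R,claim) belongs to Image_4 (i.e. F = Red_4(F') for some PCAF F') if and only if there are no arguments a,a',b,b' in F with claim(a)=claim(a') and claim(b)=claim(b') such that (a,b) ∈ wfp(F), (b,a) ∉ R, (a',b) ∈ R, and either (b,a') ∉ R, or ((a',b') ∉ R and (b',a') ∉ R). -/
/-
On each pair `{x, y}`, Reduction 4 never deletes an attack outright: an attack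
`x → y` of `G` survives, or is replaced by `y → x` when `y ≻ x` and `y` also attacks `x`;
otherwise it only adds reversed attacks.  Hence `F = Red₄(G)` for some `G` exactly when some
well-formed `R` lies inside `F.att ∪ F.att⁻¹`, meets every pair attacked in `F`, and contains
every attack of `F` that is not answered; the preference is then read off pairwise.  The
largest well-formed `R` inside `F.att ∪ F.att⁻¹` has all these properties unless `F` contains
the forbidden pattern, and the pattern rules out every such `R`.
-/

namespace CAF

def Red4Obstruction (F : CAF) : Prop :=
  ∃ a a' b b' : ℕ,
    a ∈ F.args ∧ a' ∈ F.args ∧ b ∈ F.args ∧ b' ∈ F.args ∧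
    F.claim a = F.claim a' ∧ F.claim b = F.claim b' ∧
    (a, b) ∈ F.wfp ∧ (b, a) ∉ F.att ∧ (a', b) ∈ F.att ∧
    ((b, a') ∉ F.att ∨ ((a', b') ∉ F.att ∧ (b', a') ∉ F.att))

/-- `p ≻ q` exactly when the attack `p → q` of `F` has to be produced by reversal, or the
attack `q → p` of `R` has to be suppressed. -/
def red4Pref (F : CAF) (R : Set (ℕ × ℕ)) (p q : ℕ) : Prop :=
  ((p, q) ∈ F.att ∧ (p, q) ∉ R) ∨ ((q, p) ∈ R ∧ (q, p) ∉ F.att)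

structure IsRed4Source (F : CAF) (R : Set (ℕ × ℕ)) : Prop where
  wf : ∀ a ∈ F.args, ∀ b ∈ F.args, F.claim a = F.claim b → ∀ c, ((a, c) ∈ R ↔ (b, c) ∈ R)
  att_or_swap_of_mem : ∀ {x y}, (x, y) ∈ R → (x, y) ∈ F.att ∨ (y, x) ∈ F.att
  mem_or_swap_of_att : ∀ {x y}, (x, y) ∈ F.att → (x, y) ∈ R ∨ (y, x) ∈ R
  mem_of_att_of_swap_not_att : ∀ {x y}, (x, y) ∈ F.att → (y, x) ∉ F.att → (x, y) ∈ R

end CAF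

namespace PCAF

variable (G : PCAF) {x y : ℕ}

theorem mem_redAtt_four :
    (x, y) ∈ redAtt 4 G ↔ ((x, y) ∈ G.att ∧ ¬ G.pref y x) ∨
      ((y, x) ∈ G.att ∧ (x, y) ∉ G.att ∧ G.pref x y) ∨
      ((x, y) ∈ G.att ∧ (y, x) ∉ G.att) := by
  simp [redAtt]

variable {G}

theorem mem_redAtt_four_or_swap (h : (x, y) ∈ G.att) :
    (x, y) ∈ redAtt 4 G ∨ (y, x) ∈ redAtt 4 G := by
  simp only [mem_redAtt_four]
  by_cases hyx : G.pref y x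
  · by_cases hback : (y, x) ∈ G.att
    · exact Or.inr (Or.inl ⟨hback, G.pref_asymm y x hyx⟩)
    · exact Or.inl (Or.inr (Or.inr ⟨h, hback⟩))
  · exact Or.inl (Or.inl ⟨h, hyx⟩)

theorem att_or_swap_of_mem_redAtt_four (h : (x, y) ∈ redAtt 4 G) :
    (x, y) ∈ G.att ∨ (y, x) ∈ G.att := by
  rcases (mem_redAtt_four G).1 h with ⟨h, -⟩ | ⟨h, -⟩ | ⟨h, -⟩
  exacts [Or.inl h, Or.inr h, Or.inl h]

theorem mem_att_of_mem_redAtt_four_of_swap_not_mem (h : (x, y) ∈ redAtt 4 G)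
    (hyx : (y, x) ∉ redAtt 4 G) : (x, y) ∈ G.att := by
  by_contra hxy
  have hback : (y, x) ∈ G.att := (att_or_swap_of_mem_redAtt_four h).resolve_left hxy
  exact hyx ((mem_redAtt_four G).2 (Or.inr (Or.inr ⟨hback, hxy⟩)))

theorem isRed4Source_att : (Red 4 G).IsRed4Source G.att where
  wf := G.isWf
  att_or_swap_of_mem := mem_redAtt_four_or_swap
  mem_or_swap_of_att := att_or_swap_of_mem_redAtt_four
  mem_of_att_of_swap_not_att := mem_att_of_mem_redAtt_four_of_swap_not_mem

end PCAF

namespace CAF.IsRed4Source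

variable {F : CAF} {R : Set (ℕ × ℕ)}

theorem not_red4Obstruction (hR : F.IsRed4Source R) : ¬ F.Red4Obstruction := by
  rintro ⟨a, a', b, b', ha, ha', hb, hb', hca, hcb, ⟨-, -, hab, -⟩, hba, ha'b, hopt⟩
  have hnab : (a, b) ∉ R := fun h => (hR.att_or_swap_of_mem h).elim hab hba
  have hna'b : (a', b) ∉ R := fun h => hnab ((hR.wf a ha a' ha' hca b).2 h)
  rcases hopt with hba' | ⟨ha'b', hb'a'⟩
  · exact hna'b (hR.mem_of_att_of_swap_not_att ha'b hba')
  · have hba' : (b, a') ∈ R := (hR.mem_or_swap_of_att ha'b).resolve_left hna'b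
    have hR_b'a' : (b', a') ∈ R := (hR.wf b hb b' hb' hcb a').1 hba'
    exact (hR.att_or_swap_of_mem hR_b'a').elim hb'a' ha'b'

theorem red4Pref_asymm (hR : F.IsRed4Source R) (p q : ℕ) :
    F.red4Pref R p q → ¬ F.red4Pref R q p := by
  rintro (⟨h1, h2⟩ | ⟨h1, h2⟩) (⟨h3, h4⟩ | ⟨h3, h4⟩)
  · exact (hR.mem_or_swap_of_att h1).elim h2 h4
  · exact h4 h1
  · exact h2 h3
  · exact (hR.att_or_swap_of_mem h1).elim h2 h4

def toPCAF (hR : F.IsRed4Source R) : PCAF where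
  args := F.args
  att := R
  claim := F.claim
  att_dom _ hp := (hR.att_or_swap_of_mem hp).elim (F.att_dom _) (fun h => (F.att_dom _ h).symm)
  pref := F.red4Pref R
  pref_dom _ _ hpq := hpq.elim (fun h => F.att_dom _ h.1)
    (fun h => F.att_dom _ ((hR.att_or_swap_of_mem h.1).resolve_left h.2))
  pref_asymm := hR.red4Pref_asymm
  isWf := hR.wf

theorem red_toPCAF (hR : F.IsRed4Source R) : Red 4 hR.toPCAF = F := by
  obtain ⟨args, att, claim, att_dom⟩ := F
  suffices redAtt 4 hR.toPCAF = att by simp only [Red, this]; rfl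
  ext ⟨x, y⟩
  have := hR.att_or_swap_of_mem (x := x) (y := y)
  have := hR.att_or_swap_of_mem (x := y) (y := x)
  have := hR.mem_or_swap_of_att (x := x) (y := y)
  have := hR.mem_or_swap_of_att (x := y) (y := x)
  have := hR.mem_of_att_of_swap_not_att (x := x) (y := y)
  have := hR.mem_of_att_of_swap_not_att (x := y) (y := x)
  simp only [PCAF.mem_redAtt_four]
  simp only [toPCAF, red4Pref] at *
  tauto

end CAF.IsRed4Source

namespace CAF

theorem mem_imageI_four_iff {F : CAF} : F ∈ ImageI 4 ↔ ∃ R, F.IsRed4Source R := by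
  constructor
  · rintro ⟨G, rfl⟩
    exact ⟨G.att, PCAF.isRed4Source_att⟩
  · rintro ⟨R, hR⟩
    exact ⟨hR.toPCAF, hR.red_toPCAF⟩

/-- The largest well-formed relation contained in `F.att ∪ F.att⁻¹`. -/
def claimAdj (F : CAF) : Set (ℕ × ℕ) :=
  {p | p.1 ∈ F.args ∧
    ∀ x ∈ F.args, F.claim x = F.claim p.1 → (x, p.2) ∈ F.att ∨ (p.2, x) ∈ F.att}

variable {F : CAF} {x y : ℕ}

theorem swap_mem_claimAdj (h : ¬ F.Red4Obstruction) (hxy : (x, y) ∈ F.att)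
    (hnot : (x, y) ∉ F.claimAdj) : (y, x) ∈ F.att ∧ (y, x) ∈ F.claimAdj := by
  obtain ⟨hx, hy⟩ := F.att_dom _ hxy
  obtain ⟨x', hx', hcl, hx'y, hyx'⟩ : ∃ x' ∈ F.args, F.claim x' = F.claim x ∧
      (x', y) ∉ F.att ∧ (y, x') ∉ F.att := by
    simpa [claimAdj, hx] using hnot
  have hwfp : (x', y) ∈ F.wfp := ⟨hx', hy, hx'y, x, hx, hcl.symm, hxy⟩
  have hyx : (y, x) ∈ F.att := by
    by_contra hyx
    exact h ⟨x', x, y, y, hx', hx, hy, hy, hcl, rfl, hwfp, hyx', hxy, Or.inl hyx⟩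
  refine ⟨hyx, hy, fun b' hb' hcb => ?_⟩
  by_contra hb
  push Not at hb
  exact h ⟨x', x, y, b', hx', hx, hy, hb', hcl, hcb.symm, hwfp, hyx', hxy, Or.inr ⟨hb.2, hb.1⟩⟩

theorem isRed4Source_claimAdj (h : ¬ F.Red4Obstruction) : F.IsRed4Source F.claimAdj where
  wf a ha b hb hab c := by simp [claimAdj, ha, hb, hab]
  att_or_swap_of_mem hxy := hxy.2 _ hxy.1 rfl
  mem_or_swap_of_att hxy := or_iff_not_imp_left.2 fun hnot => (swap_mem_claimAdj h hxy hnot).2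
  mem_of_att_of_swap_not_att hxy hyx := by
    by_contra hnot
    exact hyx (swap_mem_claimAdj h hxy hnot).1

end CAF

/-- Characterization of `Image_4`: a CAF `F` belongs to `Image_4` iff there are no
arguments `a, a', b, b'` of `F` with `claim a = claim a'` and `claim b = claim b'`
such that `(a,b) ∈ wfp(F)`, `(b,a) ∉ R`, `(a',b) ∈ R`, and either `(b,a') ∉ R` or
(`(a',b') ∉ R` and `(b',a') ∉ R`). -/
theorem stmt_6 (F : CAF) :
    F ∈ ImageI 4 ↔
      ¬ ∃ a a' b b' : ℕ,
          a ∈ F.args ∧ a' ∈ F.args ∧ b ∈ F.args ∧ b' ∈ F.args ∧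
          F.claim a = F.claim a' ∧ F.claim b = F.claim b' ∧
          (a, b) ∈ F.wfp ∧ (b, a) ∉ F.att ∧ (a', b) ∈ F.att ∧
          ((b, a') ∉ F.att ∨ ((a', b') ∉ F.att ∧ (b', a') ∉ F.att)) := by
  show F ∈ ImageI 4 ↔ ¬ F.Red4Obstruction
  rw [CAF.mem_imageI_four_iff]
  exact ⟨fun ⟨_, hR⟩ => hR.not_red4Obstruction, fun h => ⟨_, CAF.isRed4Source_claimAdj h⟩⟩
end

section
/- The preference-claim-based semantics prf_p^3, stb_p^3 and sem_p^3 are I-maximal for PCAFs: for every PCAF F, σ ∈ {prf, stb, sem}, and all S,T ∈ σ_p^3(F), S ⊆ T implies S = T. -/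
/-!
Reduction 3 only deletes attacks, and of two arguments in conflict in `F` at least one still
attacks the other in `Red_3(F)`. Let `E`, `E'` be admissible in `Red_3(F)` with
`claim(E) ⊆ claim(E')`. If `x ∈ E'` attacked `y ∈ E`, some `z ∈ E` would attack `x`; by
well-formedness an argument `z' ∈ E'` with the claim of `z` attacks `x` in `F`, a conflict
inside `E'`. So `E ∪ E'` is admissible, and the maximality built into preferred, stable and
semi-stable extensions forces `E = E'`.
-/

namespace CAF

variable {G : CAF} {E E' T : Set ℕ}

theorem range_mono (h : E ⊆ T) : G.range E ⊆ G.range T := by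
  rintro x (hx | ⟨a, ha, hax⟩)
  · exact Or.inl (h hx)
  · exact Or.inr ⟨a, h ha, hax⟩

theorem stb.adm (h : G.stb E) : G.adm E := by
  refine ⟨h.1, fun a ha b hba => h.2 b (G.att_dom _ hba).1 fun hb => ?_⟩
  exact h.1.2 b hb a ha hba

theorem stb.args_subset_range (h : G.stb E) : ↑G.args ⊆ G.range E := by
  intro a ha
  by_cases haE : a ∈ E
  · exact Or.inl haE
  · exact Or.inr (h.2 a ha haE)

theorem subset_of_cf_union_of_subset_range (hU : G.cf (E ∪ E')) (h : E' ⊆ G.range E) :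
    E' ⊆ E := by
  intro a ha
  rcases h ha with haE | ⟨s, hs, hsa⟩
  · exact haE
  · exact absurd hsa (hU.2 s (Or.inl hs) a (Or.inr ha))

theorem prf.eq_of_subset_of_adm (hE : G.prf E) (hT : G.adm T) (h : E ⊆ T) : E = T :=
  by_contra fun hne => hE.2 ⟨T, hT, h.ssubset_of_ne hne⟩

theorem sem.range_eq_of_subset_of_adm (hE : G.sem E) (hT : G.adm T) (h : E ⊆ T) :
    G.range E = G.range T :=
  by_contra fun hne => hE.2 ⟨T, hT, (range_mono h).ssubset_of_ne hne⟩

theorem prf.eq_of_adm_union (hE : G.prf E) (hE' : G.prf E') (hU : G.adm (E ∪ E')) :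
    E = E' :=
  (hE.eq_of_subset_of_adm hU Set.subset_union_left).trans
    (hE'.eq_of_subset_of_adm hU Set.subset_union_right).symm

theorem stb.eq_of_cf_union (hE : G.stb E) (hE' : G.stb E') (hU : G.cf (E ∪ E')) :
    E = E' := by
  refine (subset_of_cf_union_of_subset_range (Set.union_comm E E' ▸ hU) ?_).antisymm
    (subset_of_cf_union_of_subset_range hU ?_)
  · exact hE.1.1.trans hE'.args_subset_range
  · exact hE'.1.1.trans hE.args_subset_range

theorem sem.eq_of_adm_union (hE : G.sem E) (hE' : G.sem E') (hU : G.adm (E ∪ E')) :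
    E = E' := by
  have hrange : G.range E = G.range E' :=
    (hE.range_eq_of_subset_of_adm hU Set.subset_union_left).trans
      (hE'.range_eq_of_subset_of_adm hU Set.subset_union_right).symm
  refine (subset_of_cf_union_of_subset_range (Set.union_comm E E' ▸ hU.1) ?_).antisymm
    (subset_of_cf_union_of_subset_range hU.1 ?_)
  · exact hrange ▸ Set.subset_union_left
  · exact hrange ▸ Set.subset_union_left

end CAF

namespace PCAF

variable (F : PCAF)

theorem red3_att_subset : (Red 3 F).att ⊆ F.att := by
  intro p hp
  simp only [Red, redAtt] at hp
  norm_num at hp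
  tauto

theorem red3_att_or_att_swap {a b : ℕ} (h : (a, b) ∈ F.att) :
    (a, b) ∈ (Red 3 F).att ∨ (b, a) ∈ (Red 3 F).att := by
  have hasymm := F.pref_asymm b a
  simp only [Red, redAtt]
  norm_num
  tauto

variable {F} {E E' : Set ℕ}

theorem red3_not_att_of_claim_subset (hE : (Red 3 F).adm E) (hE' : (Red 3 F).adm E')
    (hc : F.claim '' E ⊆ F.claim '' E') {x y : ℕ} (hx : x ∈ E') (hy : y ∈ E) :
    (x, y) ∉ (Red 3 F).att := by
  intro hxy
  obtain ⟨z, hz, hzx⟩ := hE.2 y hy x hxy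
  obtain ⟨z', hz', hclaim⟩ := hc ⟨z, hz, rfl⟩
  have hzx : (z, x) ∈ F.att := F.red3_att_subset hzx
  have hz'x : (z', x) ∈ F.att :=
    (F.isWf z' (hE'.1.1 hz') z (F.att_dom _ hzx).1 hclaim x).mpr hzx
  rcases F.red3_att_or_att_swap hz'x with h | h
  · exact hE'.1.2 z' hz' x hx h
  · exact hE'.1.2 x hx z' hz' h

theorem red3_adm_union_of_claim_subset (hE : (Red 3 F).adm E) (hE' : (Red 3 F).adm E')
    (hc : F.claim '' E ⊆ F.claim '' E') : (Red 3 F).adm (E ∪ E') := by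
  refine ⟨⟨Set.union_subset hE.1.1 hE'.1.1, ?_⟩, ?_⟩
  · rintro a (ha | ha) b (hb | hb) hab
    · exact hE.1.2 a ha b hb hab
    · obtain ⟨z', hz', hz'a⟩ := hE'.2 b hb a hab
      exact red3_not_att_of_claim_subset hE hE' hc hz' ha hz'a
    · exact red3_not_att_of_claim_subset hE hE' hc ha hb hab
    · exact hE'.1.2 a ha b hb hab
  · rintro a (ha | ha) b hba
    · obtain ⟨z, hz, h⟩ := hE.2 a ha b hba
      exact ⟨z, Or.inl hz, h⟩
    · obtain ⟨z, hz, h⟩ := hE'.2 a ha b hba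
      exact ⟨z, Or.inr hz, h⟩

end PCAF

/-- `prf_p^3`, `stb_p^3` and `sem_p^3` are I-maximal for PCAFs. -/
theorem stmt_10 :
    ∀ σ ∈ ({CAF.prf, CAF.stb, CAF.sem} : Set (CAF → Set ℕ → Prop)),
      ∀ F : PCAF, ∀ S ∈ prefSem σ 3 F, ∀ T ∈ prefSem σ 3 F, S ⊆ T → S = T := by
  rintro σ hσ F _ ⟨E, hE, rfl⟩ _ ⟨E', hE', rfl⟩ hclaim
  simp only [Set.mem_insert_iff, Set.mem_singleton_iff] at hσ
  rcases hσ with rfl | rfl | rfl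
  · have hU := PCAF.red3_adm_union_of_claim_subset hE.1 hE'.1 hclaim
    rw [hE.eq_of_adm_union hE' hU]
  · have hU := PCAF.red3_adm_union_of_claim_subset hE.adm hE'.adm hclaim
    rw [hE.eq_of_cf_union hE' hU.1]
  · have hU := PCAF.red3_adm_union_of_claim_subset hE.1 hE'.1 hclaim
    rw [hE.eq_of_adm_union hE' hU]
end

section
/- The semantics stg_p^3 is not I-maximal for PCAFs, even when restricted to PCAFs with transitive preferences: there exists a PCAF F with transitive preference relation and sets of claims S,T ∈ stg_p^3(F) with S ⊊ T. In particular, this is witnessed by the PCAF F' with arguments a, a', b, c, claims claim(a)=claim(a')=α, claim(b)=β, claim(c)=γ, attacks {(a,b),(b,c),(c,a),(a',b),(b,a')} and preference b ≻ a', for which stg_p^3(F') = {{α},{α,γ},{β}}. -/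
/-
With a, a', b, c encoded as 0, 1, 2, 3, Reduction 3 deletes exactly the attack (a', b), since
it is symmetric and b ≻ a'. In the reduced AF (attacks a → b → c → a and b → a') the stage
extensions are {a, a'}, {a', c} and {b}, with ranges {a, a', b}, {a, a', c} and {a', b, c}:
no conflict-free set has full range, because covering the 3-cycle a → b → c → a needs two
adjacent members. Their claim sets {α}, {α, γ}, {β} contain {α} ⊊ {α, γ}. Stage extensions are
conflict-free, hence finite subsets of the arguments, so the enumeration is a finite computation.
-/

namespace CAF

/- Decidable counterparts of `cf`, `range` and `stg` for finite sets of arguments drawn from `A`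
under a finite attack relation `R`. -/

def IsConflictFreeIn (R : Finset (ℕ × ℕ)) (s : Finset ℕ) : Prop :=
  ∀ a ∈ s, ∀ b ∈ s, (a, b) ∉ R

def rangeIn (A : Finset ℕ) (R : Finset (ℕ × ℕ)) (s : Finset ℕ) : Finset ℕ :=
  s ∪ A.filter fun b => ∃ a ∈ s, (a, b) ∈ R

def IsStageIn (A : Finset ℕ) (R : Finset (ℕ × ℕ)) (s : Finset ℕ) : Prop :=
  IsConflictFreeIn R s ∧
    ∀ t ∈ A.powerset, IsConflictFreeIn R t → ¬ rangeIn A R s ⊂ rangeIn A R t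

instance (R : Finset (ℕ × ℕ)) (s : Finset ℕ) : Decidable (IsConflictFreeIn R s) := by
  unfold IsConflictFreeIn; infer_instance

instance (A : Finset ℕ) (R : Finset (ℕ × ℕ)) (s : Finset ℕ) : Decidable (IsStageIn A R s) := by
  unfold IsStageIn; infer_instance

variable {F : CAF} {R : Finset (ℕ × ℕ)}

lemma cf_coe_iff (hR : F.att = ↑R) (s : Finset ℕ) :
    F.cf ↑s ↔ s ⊆ F.args ∧ IsConflictFreeIn R s := by
  simp [cf, IsConflictFreeIn, hR]

lemma range_coe (hR : F.att = ↑R) (s : Finset ℕ) :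
    F.range ↑s = ↑(rangeIn F.args R s) := by
  ext b
  simp only [range, attacks, rangeIn, Finset.coe_union, Finset.coe_filter, Set.mem_union,
    Set.mem_ofPred_eq, Finset.mem_coe]
  refine or_congr_right ⟨fun ⟨a, ha, hab⟩ => ?_, fun ⟨_, a, ha, hab⟩ => ⟨a, ha, hR ▸ hab⟩⟩
  exact ⟨(F.att_dom _ hab).2, a, ha, by rwa [hR] at hab⟩

lemma exists_finset_of_cf {S : Set ℕ} (h : F.cf S) : ∃ s : Finset ℕ, ↑s = S :=
  (F.args.finite_toSet.subset h.1).exists_finset_coe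

lemma stg_coe_iff (hR : F.att = ↑R) {s : Finset ℕ} (hs : s ⊆ F.args) :
    F.stg ↑s ↔ IsStageIn F.args R s := by
  simp only [stg, IsStageIn, cf_coe_iff hR, hs, true_and, Finset.mem_powerset, not_exists,
    not_and]
  refine and_congr_right fun _ => ⟨fun h t ht hcf => ?_, fun h T hT => ?_⟩
  · rw [← Finset.coe_ssubset, ← range_coe hR, ← range_coe hR]
    exact h t (by simpa [cf_coe_iff hR] using ⟨ht, hcf⟩)
  · obtain ⟨t, rfl⟩ := exists_finset_of_cf hT
    rw [cf_coe_iff hR] at hT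
    rw [range_coe hR, range_coe hR, Finset.coe_ssubset]
    exact h t hT.1 hT.2

lemma claimSem_stg_eq (hR : F.att = ↑R) :
    claimSem stg F =
      (fun s : Finset ℕ => F.claim '' ↑s) '' ↑(F.args.powerset.filter (IsStageIn F.args R)) := by
  ext C
  simp only [claimSem, Set.mem_ofPred_eq, Set.mem_image, Finset.coe_filter,
    Finset.mem_powerset]
  constructor
  · rintro ⟨S, hS, rfl⟩
    obtain ⟨s, rfl⟩ := exists_finset_of_cf hS.1
    have hs : s ⊆ F.args := by simpa using hS.1.1
    exact ⟨s, ⟨hs, (stg_coe_iff hR hs).1 hS⟩, rfl⟩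
  · rintro ⟨s, ⟨hs, hstg⟩, rfl⟩
    exact ⟨s, (stg_coe_iff hR hs).2 hstg, rfl⟩

end CAF

def notIMaximalWitness : PCAF where
  args := {0, 1, 2, 3}
  att := {(0, 2), (2, 3), (3, 0), (1, 2), (2, 1)}
  claim := fun n => if n ≤ 1 then 0 else n - 1
  att_dom := by
    rintro ⟨a, b⟩ hp
    simp only [Set.mem_insert_iff, Set.mem_singleton_iff, Prod.mk.injEq] at hp
    simp only [Finset.mem_insert, Finset.mem_singleton]
    omega
  pref := fun x y => x = 2 ∧ y = 1
  pref_dom := by rintro a b ⟨rfl, rfl⟩; simp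
  pref_asymm := by rintro a b ⟨rfl, rfl⟩ ⟨h, _⟩; omega
  isWf := by
    intro a ha b hb hab c
    simp only [Finset.mem_insert, Finset.mem_singleton] at ha hb
    rcases ha with rfl | rfl | rfl | rfl <;> rcases hb with rfl | rfl | rfl | rfl <;>
      simp_all

lemma notIMaximalWitness_pref_transitive : Transitive notIMaximalWitness.pref := by
  rintro a b c ⟨rfl, rfl⟩ ⟨h, -⟩
  omega

lemma red3_notIMaximalWitness_att :
    (Red 3 notIMaximalWitness).att = ↑({(0, 2), (2, 3), (3, 0), (2, 1)} : Finset (ℕ × ℕ)) := by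
  ext ⟨a, b⟩
  simp only [Red, notIMaximalWitness, redAtt, OfNat.ofNat_ne_one, ↓reduceIte, Nat.succ_ne_self,
    Set.mem_insert_iff, Set.mem_singleton_iff, not_and, Prod.mk.injEq, not_or, Set.mem_ofPred_eq,
    Finset.coe_insert, Finset.coe_singleton]
  omega

lemma stage_red3_notIMaximalWitness :
    (Red 3 notIMaximalWitness).args.powerset.filter
        (CAF.IsStageIn (Red 3 notIMaximalWitness).args {(0, 2), (2, 3), (3, 0), (2, 1)}) =
      {{0, 1}, {1, 3}, {2}} := by
  decide

lemma prefSem_stg_red3_notIMaximalWitness :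
    prefSem CAF.stg 3 notIMaximalWitness = ({{0}, {0, 2}, {1}} : Set (Set ℕ)) := by
  rw [prefSem, CAF.claimSem_stg_eq red3_notIMaximalWitness_att, stage_red3_notIMaximalWitness]
  simp [Set.image_insert_eq, Red, notIMaximalWitness]

/-- `stg_p^3` is not I-maximal for PCAFs, even for transitive preferences.
This is witnessed by the PCAF with arguments `a = 0`, `a' = 1`, `b = 2`, `c = 3`,
claims `α = 0` (for `a` and `a'`), `β = 1` (for `b`), `γ = 2` (for `c`),
attacks `{(a,b),(b,c),(c,a),(a',b),(b,a')}` and preference `b ≻ a'`,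
for which `stg_p^3(F') = {{α}, {α,γ}, {β}}`. -/
theorem stmt_11 :
    (∃ F : PCAF, Transitive F.pref ∧
      ∃ S T : Set ℕ, S ∈ prefSem CAF.stg 3 F ∧ T ∈ prefSem CAF.stg 3 F ∧ S ⊂ T) ∧
    (∃ F : PCAF, Transitive F.pref ∧
      F.args = ({0, 1, 2, 3} : Finset ℕ) ∧
      F.att = ({(0, 2), (2, 3), (3, 0), (1, 2), (2, 1)} : Set (ℕ × ℕ)) ∧
      F.claim 0 = 0 ∧ F.claim 1 = 0 ∧ F.claim 2 = 1 ∧ F.claim 3 = 2 ∧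
      (∀ x y : ℕ, F.pref x y ↔ (x = 2 ∧ y = 1)) ∧
      prefSem CAF.stg 3 F = ({{0}, {0, 2}, {1}} : Set (Set ℕ)) ∧
      ∃ S T : Set ℕ, S ∈ prefSem CAF.stg 3 F ∧ T ∈ prefSem CAF.stg 3 F ∧ S ⊂ T) := by
  have hST : ∃ S T : Set ℕ,
      S ∈ prefSem CAF.stg 3 notIMaximalWitness ∧ T ∈ prefSem CAF.stg 3 notIMaximalWitness ∧ S ⊂ T := by
    refine ⟨{0}, {0, 2}, ?_, ?_, ?_⟩
    · simp [prefSem_stg_red3_notIMaximalWitness]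
    · simp [prefSem_stg_red3_notIMaximalWitness]
    · exact (Set.ssubset_iff_of_subset (by simp)).2 ⟨2, by simp, by simp⟩
  exact ⟨⟨notIMaximalWitness, notIMaximalWitness_pref_transitive, hST⟩, notIMaximalWitness, notIMaximalWitness_pref_transitive,
    rfl, rfl, rfl, rfl, rfl, rfl, fun _ _ => Iff.rfl, prefSem_stg_red3_notIMaximalWitness, hST⟩
end

section
/- Let F be a PCAF, C a set of claims, and i ∈ {2,3,4}. Then C ∈ cf_p^i(F) if and only if claim(E_1^i(C)) = C. Moreover, if C ∈ cf_p^i(F), then E_1^i(C) is the unique ⊆-maximal conflict-free set S in Red_i(F) with claim(S) = C: E_1^i(C) is conflict-free in Red_i(F), and every conflict-free set S in Red_i(F) with claim(S) = C satisfies S ⊆ E_1^i(C). -/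
/-!
For `i ∈ {2,3,4}` every attack of `F` survives in `Red_i(F)`, possibly reversed, and every
attack of `Red_i(F)` is an attack of `F`, possibly reversed; so `Red_i(F)` and `F` have the
same conflict-free sets. `E_1(C)` is conflict-free in `F`, since its members are not even
attacked by `E_0(C)`. Conversely, if `S` is conflict-free with `claim(S) = C` and some
`a ∈ E_0(C)` attacked `b ∈ S`, then an argument `a' ∈ S` with the claim of `a` would attack `b`
by well-formedness; hence `S ⊆ E_1(C)`, and taking claims gives `claim(E_1(C)) = C`.
-/

namespace CAF

theorem cf_of_att_subset_symm {G H : CAF} {S : Set ℕ} (hS : G.cf S)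
    (hargs : (G.args : Set ℕ) ⊆ H.args)
    (hatt : ∀ a b, (a, b) ∈ H.att → (a, b) ∈ G.att ∨ (b, a) ∈ G.att) : H.cf S := by
  refine ⟨hS.1.trans hargs, fun a ha b hb hab => ?_⟩
  rcases hatt a b hab with h | h
  · exact hS.2 a ha b hb h
  · exact hS.2 b hb a ha h

end CAF

theorem mem_att_or_swap_of_mem_redAtt {i : ℕ} (hi : i ∈ ({2, 3, 4} : Set ℕ)) (F : PCAF)
    {a b : ℕ} (h : (a, b) ∈ redAtt i F) : (a, b) ∈ F.att ∨ (b, a) ∈ F.att := by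
  rcases hi with rfl | rfl | rfl <;> simp only [redAtt] at h <;> norm_num at h <;> tauto

theorem mem_redAtt_or_swap_of_mem_att {i : ℕ} (hi : i ∈ ({2, 3, 4} : Set ℕ)) (F : PCAF)
    {a b : ℕ} (h : (a, b) ∈ F.att) : (a, b) ∈ redAtt i F ∨ (b, a) ∈ redAtt i F := by
  have hasymm := F.pref_asymm b a
  rcases hi with rfl | rfl | rfl <;> simp only [redAtt] <;> norm_num <;>
    by_cases hpref : F.pref b a <;> by_cases hba : (b, a) ∈ F.att <;> tauto

theorem cf_Red_iff {i : ℕ} (hi : i ∈ ({2, 3, 4} : Set ℕ)) (F : PCAF) (S : Set ℕ) :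
    (Red i F).cf S ↔ F.cf S :=
  ⟨fun hS => CAF.cf_of_att_subset_symm hS subset_rfl
      fun _ _ h => mem_redAtt_or_swap_of_mem_att hi F h,
    fun hS => CAF.cf_of_att_subset_symm hS subset_rfl
      fun _ _ h => mem_att_or_swap_of_mem_redAtt hi F h⟩

section E1

variable (F : PCAF) (C : Set ℕ)

theorem E1_subset_E0 : E1 F C ⊆ E0 F C := Set.sdiff_subset

theorem cf_E1 : F.cf (E1 F C) :=
  ⟨fun _ ha => (E1_subset_E0 F C ha).1,
    fun a ha _ hb hab => hb.2 ⟨a, E1_subset_E0 F C ha, hab⟩⟩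

theorem claim_image_E1_subset : F.claim '' E1 F C ⊆ C := by
  rintro _ ⟨a, ha, rfl⟩
  exact (E1_subset_E0 F C ha).2

variable {F C}

theorem subset_E1_of_cf {S : Set ℕ} (hS : F.cf S) (hSC : F.claim '' S = C) : S ⊆ E1 F C := by
  intro b hb
  refine ⟨⟨hS.1 hb, hSC ▸ Set.mem_image_of_mem _ hb⟩, ?_⟩
  rintro ⟨a, haE0, hab⟩
  obtain ⟨a', ha'S, ha'a⟩ : F.claim a ∈ F.claim '' S := hSC ▸ haE0.2
  exact hS.2 a' ha'S b hb ((F.isWf a' (hS.1 ha'S) a haE0.1 ha'a b).2 hab)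

end E1

/-- For `i ∈ {2,3,4}`: `C ∈ cf_p^i(F)` iff `claim(E_1^i(C)) = C`; moreover, if
`C ∈ cf_p^i(F)` then `E_1^i(C)` is the unique ⊆-maximal conflict-free set `S` of
`Red_i(F)` with `claim(S) = C`. -/
theorem stmt_13 (F : PCAF) (C : Set ℕ) :
    ∀ i ∈ ({2, 3, 4} : Set ℕ),
      (C ∈ prefSem CAF.cf i F ↔ F.claim '' E1 F C = C) ∧
      (C ∈ prefSem CAF.cf i F →
        (Red i F).cf (E1 F C) ∧
        ∀ S : Set ℕ, (Red i F).cf S → F.claim '' S = C → S ⊆ E1 F C) := by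
  intro i hi
  have hE1 : (Red i F).cf (E1 F C) := (cf_Red_iff hi F _).2 (cf_E1 F C)
  have hmax : ∀ S : Set ℕ, (Red i F).cf S → F.claim '' S = C → S ⊆ E1 F C :=
    fun S hS hSC => subset_E1_of_cf ((cf_Red_iff hi F S).1 hS) hSC
  refine ⟨⟨?_, fun h => ⟨E1 F C, hE1, h⟩⟩, fun _ => ⟨hE1, hmax⟩⟩
  rintro ⟨S, hS, hSC⟩
  exact (claim_image_E1_subset F C).antisymm
    (hSC.symm.trans_subset (Set.image_mono (hmax S hS hSC)))
end
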